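/- Fix an integer n ≥ 1, masses m_1, …, m_n > 0 and radii s_1, …, s_n > 0, and set E_min = −∑_{i=1}^n m_i/s_i. Let z : ℝ → ℝ be a twice differentiable solution of z''(t) = −∑_{i=1}^n m_i z(t)/(s_i² + z(t)²)^{3/2} whose energy E = z'(0)²/2 − ∑_{i=1}^n m_i (s_i² + z(0)²)^{-1/2} satisfies E_min < E < 0. Then z is periodic: there exists T > 0 such that z(t + T) = z(t) for all t ∈ ℝ. -/

import Mathlib

/-!
Energy conservation with `E < 0` confines the orbit to `|z| ≤ (∑ mᵢ) / (-E)`. On a bounded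
orbit the velocity vanishes after any given time: otherwise `z` is eventually monotone, and either
it stays `≤ 0`, where the force keeps `z'` from decreasing and `z` escapes to `+∞`, or it becomes
positive, after which the force is bounded away from `0` and drives `z'` below zero. The force is
smooth, hence Lipschitz on the bounded range of `z`, so uniqueness for the system in `(z, z')`
makes the orbit symmetric about each turning point, and symmetry about two turning points
`t₀ < t₁` gives the period `2 (t₁ - t₀)`.
-/

open Set Filter

theorem periodic_of_symmetric_about {α : Type*} {f : ℝ → α} {a b : ℝ}
    (ha : ∀ u, f (a + u) = f (a - u)) (hb : ∀ u, f (b + u) = f (b - u)) :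
    Function.Periodic f (2 * (b - a)) := fun t => by
  calc f (t + 2 * (b - a)) = f (b + (t + b - 2 * a)) := by ring_nf
    _ = f (a + (a - t)) := by rw [hb]; ring_nf
    _ = f t := by rw [ha]; ring_nf

theorem tendsto_atTop_of_le_deriv {f : ℝ → ℝ} {a c : ℝ} (hf : Differentiable ℝ f) (hc : 0 < c)
    (h : ∀ t ∈ Ioi a, c ≤ deriv f t) : Tendsto f atTop atTop := by
  have hlin : ∀ t ∈ Ici a, f a + c * (t - a) ≤ f t := fun t ht => by
    have := (convex_Ici a).mul_sub_le_image_sub_of_le_deriv hf.continuous.continuousOn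
      hf.differentiableOn (by simpa using h) a self_mem_Ici t ht ht
    linarith
  refine tendsto_atTop_mono' _ (eventually_ge_atTop a |>.mono hlin) ?_
  exact tendsto_atTop_add_const_left _ _
    ((tendsto_id.atTop_add tendsto_const_nhds).const_mul_atTop hc)

theorem IsCompact.exists_le_neg_of_neg {F : ℝ → ℝ} {K : Set ℝ} (hK : IsCompact K)
    (hF : ContinuousOn F K) (hneg : ∀ x ∈ K, F x < 0) : ∃ δ > 0, ∀ x ∈ K, F x ≤ -δ := by
  rcases K.eq_empty_or_nonempty with rfl | hne
  · exact ⟨1, one_pos, by simp⟩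
  obtain ⟨x₀, hx₀, hmax⟩ := hK.exists_isMaxOn hne hF
  exact ⟨-F x₀, by linarith [hneg x₀ hx₀], fun x hx => by simpa using hmax hx⟩

theorem IsPreconnected.forall_pos_or_forall_neg {X : Type*} [TopologicalSpace X] {s : Set X}
    {f : X → ℝ} (hs : IsPreconnected s) (hf : ContinuousOn f s) (h0 : ∀ x ∈ s, f x ≠ 0) :
    (∀ x ∈ s, 0 < f x) ∨ ∀ x ∈ s, f x < 0 := by
  by_contra! h
  obtain ⟨⟨x, hx, hfx⟩, y, hy, hfy⟩ := h
  obtain ⟨w, hw, hfw⟩ := hs.intermediate_value hx hy hf ⟨hfx, hfy⟩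
  exact h0 w hw hfw

section SecondOrder

variable {F z : ℝ → ℝ}

theorem not_forall_deriv_pos_of_forall_le (hz : Differentiable ℝ z)
    (hz' : Differentiable ℝ (deriv z)) (hode : ∀ t, deriv (deriv z) t = F (z t))
    (hF : Continuous F) (hF_neg : ∀ x, 0 < x → F x < 0) (hF_nonneg : ∀ x ≤ 0, 0 ≤ F x)
    {B : ℝ} (hB : ∀ t, z t ≤ B) (a : ℝ) :
    ¬ ∀ t ∈ Ioi a, 0 < deriv z t := by
  intro hpos
  have hmono : MonotoneOn z (Ioi a) := monotoneOn_of_deriv_nonneg (convex_Ioi a)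
    hz.continuous.continuousOn hz.differentiableOn (by simpa using fun t ht => (hpos t ht).le)
  by_cases hcross : ∃ t₂ > a, 0 < z t₂
  · -- from `t₂` on, `z` stays in `[z t₂, B]`, where the force is uniformly negative
    obtain ⟨t₂, ht₂, hzt₂⟩ := hcross
    obtain ⟨δ, hδ, hFδ⟩ := (isCompact_Icc (a := z t₂) (b := B)).exists_le_neg_of_neg
      hF.continuousOn fun x hx => hF_neg x (hzt₂.trans_le hx.1)
    have hdecel : ∀ t ∈ Ioi t₂, δ ≤ deriv (-deriv z) t := fun t ht => by
      rw [deriv.neg']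
      show δ ≤ -deriv (deriv z) t
      linarith [hode t, hFδ (z t) ⟨hmono ht₂ (ht₂.trans ht) ht.le, hB t⟩]
    obtain ⟨t, hneg, ht⟩ := ((tendsto_atTop_of_le_deriv hz'.neg hδ hdecel).eventually_gt_atTop 0
      |>.and (eventually_gt_atTop t₂)).exists
    exact (hpos t (ht₂.trans ht)).not_gt (neg_pos.mp hneg)
  · push Not at hcross
    have haccel : ∀ t ∈ Ioi (a + 1), deriv z (a + 1) ≤ deriv z t := fun t ht =>
      monotoneOn_of_deriv_nonneg (convex_Ioi a) hz'.continuous.continuousOn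
        hz'.differentiableOn (by simpa [hode] using fun t ht => hF_nonneg _ (hcross t ht))
        (by simp) (by simp at ht ⊢; linarith) ht.le
    obtain ⟨t, hzt, ht⟩ := ((tendsto_atTop_of_le_deriv hz (hpos _ (by simp)) haccel
      ).eventually_gt_atTop 0 |>.and (eventually_gt_atTop a)).exists
    exact (hcross t ht).not_gt hzt

theorem exists_gt_deriv_eq_zero_of_abs_le (hz : Differentiable ℝ z)
    (hz' : Differentiable ℝ (deriv z)) (hode : ∀ t, deriv (deriv z) t = F (z t))
    (hF : Continuous F) (hF_odd : ∀ x, F (-x) = -F x) (hF_neg : ∀ x, 0 < x → F x < 0)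
    {B : ℝ} (hB : ∀ t, |z t| ≤ B) (a : ℝ) : ∃ c > a, deriv z c = 0 := by
  have hF_nonneg : ∀ x ≤ 0, 0 ≤ F x := fun x hx => by
    rcases hx.lt_or_eq with hx | rfl
    · linarith [hF_odd x, hF_neg (-x) (neg_pos.mpr hx)]
    · linarith [neg_zero (G := ℝ) ▸ hF_odd 0]
  by_contra! hne
  rcases isPreconnected_Ioi.forall_pos_or_forall_neg hz'.continuous.continuousOn hne with
    hpos | hneg
  · exact not_forall_deriv_pos_of_forall_le hz hz' hode hF hF_neg hF_nonneg
      (fun t => (abs_le.mp (hB t)).2) a hpos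
  · have hderiv : deriv (-z) = -deriv z := by rw [deriv.neg']; rfl
    refine not_forall_deriv_pos_of_forall_le (z := -z) hz.neg (hderiv ▸ hz'.neg) (fun t => ?_) hF
      hF_neg hF_nonneg (fun t => (neg_le.mp (abs_le.mp (hB t)).1)) a
      (fun t ht => by simpa [hderiv] using hneg t ht)
    rw [hderiv, deriv.neg']
    simp [hode, hF_odd]

theorem symmetric_about_of_deriv_eq_zero (hz : Differentiable ℝ z)
    (hz' : Differentiable ℝ (deriv z)) (hode : ∀ t, deriv (deriv z) t = F (z t))
    {K : NNReal} {S : Set ℝ} (hF : LipschitzOnWith K F S) (hzS : ∀ t, z t ∈ S)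
    {c : ℝ} (hc : deriv z c = 0) (u : ℝ) : z (c + u) = z (c - u) := by
  let v : ℝ × ℝ → ℝ × ℝ := fun p => (p.2, F p.1)
  have hv : LipschitzOnWith _ v (S ×ˢ univ) := LipschitzWith.prod_snd.lipschitzOnWith.prodMk
    (hF.comp LipschitzWith.prod_fst.lipschitzOnWith fun p hp => hp.1)
  -- by time reversal, `u ↦ (z (c - u), -z' (c - u))` solves the same system, and at `u = 0` it
  -- agrees with `u ↦ (z (c + u), z' (c + u))` because `z' c = 0`
  have hfwd : ∀ t, HasDerivAt (fun u => (z (c + u), deriv z (c + u)))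
      (v (z (c + t), deriv z (c + t))) t ∧ (z (c + t), deriv z (c + t)) ∈ S ×ˢ univ := fun t =>
    ⟨((hz _).hasDerivAt.comp_const_add c t).prodMk
      (hode (c + t) ▸ (hz' _).hasDerivAt.comp_const_add c t), hzS _, trivial⟩
  have hbwd : ∀ t, HasDerivAt (fun u => (z (c - u), -deriv z (c - u)))
      (v (z (c - t), -deriv z (c - t))) t ∧ (z (c - t), -deriv z (c - t)) ∈ S ×ˢ univ :=
    fun t => ⟨by
      refine ((hz _).hasDerivAt.comp_const_sub c t).prodMk ?_
      simpa [v, hode] using ((hz' _).hasDerivAt.comp_const_sub c t).fun_neg, hzS _, trivial⟩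
  have := ODE_solution_unique_univ (v := fun _ => v) (t₀ := 0) (fun _ => hv) hfwd hbwd
    (by simp [hc])
  exact congrArg Prod.fst (congrFun this u)

theorem energy_eq_of_hasDerivAt_potential (hz : Differentiable ℝ z)
    (hz' : Differentiable ℝ (deriv z)) (hode : ∀ t, deriv (deriv z) t = F (z t))
    {U : ℝ → ℝ} (hU : ∀ x, HasDerivAt U (F x) x) (t : ℝ) :
    deriv z t ^ 2 / 2 - U (z t) = deriv z 0 ^ 2 / 2 - U (z 0) := by
  have hE : ∀ t, HasDerivAt (fun t => deriv z t ^ 2 / 2 - U (z t)) 0 t := fun t => by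
    have := (((hz' t).hasDerivAt.pow 2).div_const 2).sub ((hU (z t)).comp t (hz t).hasDerivAt)
    refine this.congr_deriv ?_
    rw [hode]
    push_cast
    ring
  exact is_const_of_deriv_eq_zero (fun t => (hE t).differentiableAt) (fun t => (hE t).deriv) t 0

end SecondOrder

section Sitnikov

variable {ι : Type*} [Fintype ι] (m s : ι → ℝ)

noncomputable def sitnikovForce (x : ℝ) : ℝ :=
  -∑ i, m i * x / (s i ^ 2 + x ^ 2) ^ ((3 : ℝ) / 2)

noncomputable def sitnikovPotential (x : ℝ) : ℝ :=
  ∑ i, m i * (s i ^ 2 + x ^ 2) ^ (-(1 / 2) : ℝ)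

variable {m s}

theorem sitnikovForce_neg (x : ℝ) : sitnikovForce m s (-x) = -sitnikovForce m s x := by
  simp [sitnikovForce, neg_div]

theorem sitnikovForce_neg_of_pos [Nonempty ι] (hm : ∀ i, 0 < m i) {x : ℝ} (hx : 0 < x) :
    sitnikovForce m s x < 0 :=
  neg_neg_of_pos <| Finset.sum_pos
    (fun i _ => div_pos (mul_pos (hm i) hx) (Real.rpow_pos_of_pos (by positivity) _))
    Finset.univ_nonempty

theorem contDiff_sitnikovForce (hs : ∀ i, s i ≠ 0) {k : WithTop ℕ∞} :
    ContDiff ℝ k (sitnikovForce m s) := by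
  have hpos : ∀ i x, 0 < s i ^ 2 + x ^ 2 := fun i x => by have := hs i; positivity
  unfold sitnikovForce
  refine (ContDiff.sum fun i _ => ?_).neg
  exact (contDiff_const.mul contDiff_id).div
    ((contDiff_const.add (contDiff_id.pow 2)).rpow_const_of_ne fun x => (hpos i x).ne')
    fun x => (Real.rpow_pos_of_pos (hpos i x) _).ne'

theorem hasDerivAt_sitnikovPotential (hs : ∀ i, s i ≠ 0) (x : ℝ) :
    HasDerivAt (sitnikovPotential m s) (sitnikovForce m s x) x := by
  have hpos : ∀ i, 0 < s i ^ 2 + x ^ 2 := fun i => by have := hs i; positivity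
  unfold sitnikovForce sitnikovPotential
  rw [← Finset.sum_neg_distrib]
  refine HasDerivAt.fun_sum fun i _ => ?_
  have := ((hasDerivAt_pow 2 x).const_add (s i ^ 2)).rpow_const
    (p := (-(1 / 2) : ℝ)) (Or.inl (hpos i).ne') |>.const_mul (m i)
  refine this.congr_deriv ?_
  rw [show (-(1 / 2) : ℝ) - 1 = -((3 : ℝ) / 2) by norm_num, Real.rpow_neg (hpos i).le]
  push_cast
  ring

theorem abs_mul_sitnikovPotential_le (hm : ∀ i, 0 ≤ m i) (x : ℝ) :
    |x| * sitnikovPotential m s x ≤ ∑ i, m i := by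
  rw [sitnikovPotential, Finset.mul_sum]
  refine Finset.sum_le_sum fun i _ => ?_
  have hP : 0 ≤ s i ^ 2 + x ^ 2 := by positivity
  calc |x| * (m i * (s i ^ 2 + x ^ 2) ^ (-(1 / 2) : ℝ))
      = m i * (|x| / √(s i ^ 2 + x ^ 2)) := by
        rw [Real.rpow_neg hP, ← Real.sqrt_eq_rpow]; ring
    _ ≤ m i * 1 := mul_le_mul_of_nonneg_left (div_le_one_of_le₀
        (Real.abs_le_sqrt (le_add_of_nonneg_left (sq_nonneg _))) (Real.sqrt_nonneg _)) (hm i)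
    _ = m i := mul_one _

end Sitnikov

theorem sitnikov_negative_energy_periodic_general
    (n : ℕ) (hn : 1 ≤ n) (m s : Fin n → ℝ)
    (hm : ∀ i, 0 < m i) (hs : ∀ i, 0 < s i)
    (z : ℝ → ℝ) (hz : Differentiable ℝ z) (hz' : Differentiable ℝ (deriv z))
    (hode : ∀ t : ℝ, deriv (deriv z) t =
      -∑ i, m i * z t / (s i ^ 2 + z t ^ 2) ^ ((3 : ℝ) / 2))
    (E : ℝ)
    (hE : E = (deriv z 0) ^ 2 / 2
      - ∑ i, m i * (s i ^ 2 + z 0 ^ 2) ^ (-(1 / 2) : ℝ))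
    (hEneg : E < 0) :
    ∃ T : ℝ, 0 < T ∧ ∀ t : ℝ, z (t + T) = z t := by
  have : Nonempty (Fin n) := ⟨⟨0, hn⟩⟩
  have hs₀ : ∀ i, s i ≠ 0 := fun i => (hs i).ne'
  have hF : ContDiff ℝ 1 (sitnikovForce m s) := contDiff_sitnikovForce hs₀
  set B := (∑ i, m i) / -E
  have hbound : ∀ t, z t ∈ Icc (-B) B := fun t => by
    have henergy : deriv z t ^ 2 / 2 - sitnikovPotential m s (z t) = E :=
      (energy_eq_of_hasDerivAt_potential hz hz' hode (hasDerivAt_sitnikovPotential hs₀) t).trans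
        hE.symm
    rw [mem_Icc, ← abs_le, le_div_iff₀ (neg_pos.mpr hEneg)]
    nlinarith [abs_mul_sitnikovPotential_le (s := s) (fun i => (hm i).le) (z t),
      abs_nonneg (z t), sq_nonneg (deriv z t)]
  obtain ⟨K, hK⟩ :=
    hF.locallyLipschitz.locallyLipschitzOn.exists_lipschitzOnWith_of_compact isCompact_Icc
  have hturn := exists_gt_deriv_eq_zero_of_abs_le hz hz' hode hF.continuous sitnikovForce_neg
    (fun _ => sitnikovForce_neg_of_pos hm) fun t => abs_le.mpr (hbound t)
  obtain ⟨t₀, -, ht₀⟩ := hturn 0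
  obtain ⟨t₁, ht₀₁, ht₁⟩ := hturn t₀
  exact ⟨2 * (t₁ - t₀), by linarith, periodic_of_symmetric_about
    (symmetric_about_of_deriv_eq_zero hz hz' hode hK hbound ht₀)
    (symmetric_about_of_deriv_eq_zero hz hz' hode hK hbound ht₁)⟩

/-- Solutions of the Sitnikov equation with energy strictly between
`E_min = −∑ m_i/s_i` and `0` are periodic. -/
theorem sitnikov_negative_energy_periodic
    (n : ℕ) (hn : 1 ≤ n) (m s : Fin n → ℝ)
    (hm : ∀ i, 0 < m i) (hs : ∀ i, 0 < s i)
    (Emin : ℝ) (hEmin : Emin = -∑ i, m i / s i)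
    (z : ℝ → ℝ) (hz : Differentiable ℝ z) (hz' : Differentiable ℝ (deriv z))
    (hode : ∀ t : ℝ, deriv (deriv z) t =
      -∑ i, m i * z t / (s i ^ 2 + z t ^ 2) ^ ((3 : ℝ) / 2))
    (E : ℝ)
    (hE : E = (deriv z 0) ^ 2 / 2
      - ∑ i, m i * (s i ^ 2 + z 0 ^ 2) ^ (-(1 / 2) : ℝ))
    (hElow : Emin < E) (hEneg : E < 0) :
    ∃ T : ℝ, 0 < T ∧ ∀ t : ℝ, z (t + T) = z t :=
  sitnikov_negative_energy_periodic_general n hn m s hm hs z hz hz' hode E hE hEneg
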